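/- Let four lines in the plane be pairwise non-parallel and such that no three are concurrent. Then the orthocenters of the four triangles formed by taking the lines three at a time are collinear (they lie on the Steiner line of the complete quadrilateral). -/

import Mathlib

/-!
For points `A`, `B`, the quantity `⟪H - A, H - B⟫` is the power of `H` with respect to the circle
on the diameter `AB`. If `H` is the orthocentre of a triangle `XYZ`, then `⟪H - X, H - X'⟫` takes
the same value for every point `X'` of the line `YZ`, and that value does not depend on the
vertex `X`. Each diagonal `P12 P34`, `P13 P24` of the complete quadrilateral joins a vertex of each
of the four triangles to a point on the opposite side, so every orthocentre has equal power with
respect to the two circles on these diagonals: the four orthocentres lie on their radical axis.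
That axis is a line because the centres differ: if the diagonals `P12 P34` and `P13 P24` had the
same midpoint, `P12 P13 P34 P24` would be a parallelogram and the lines `1` and `4`, which meet at
`P14`, would coincide.
-/

/-- Perpendicularity of plane vectors via the real inner product on `ℂ`. -/
def Perp (u v : ℂ) : Prop := (u * (starRingEnd ℂ) v).re = 0

/-- `H` is the orthocentre of the (nondegenerate) triangle `XYZ`. -/
def IsOrthocenter (H X Y Z : ℂ) : Prop :=
  Perp (H - X) (Y - Z) ∧ Perp (H - Y) (X - Z)

open Module RealInnerProductSpace

theorem exists_smul_sub_eq_sub_of_mem_affineSpan_pair {k V : Type*} [Ring k] [AddCommGroup V]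
    [Module k V] {X Y Z : V} (h : X ∈ line[k, Y, Z]) : ∃ r : k, r • (Y - Z) = X - Z := by
  rwa [← vsub_vadd X Z, vadd_right_mem_affineSpan_pair] at h

section InnerProductSpace

variable {V : Type*} [NormedAddCommGroup V] [InnerProductSpace ℝ V]

theorem inner_sub_sub_eq_of_orthocenter {H X Y Z X' Y' : V}
    (hX : ⟪H - X, Y - Z⟫ = 0) (hY : ⟪H - Y, X - Z⟫ = 0)
    (hX' : X' ∈ line[ℝ, Y, Z]) (hY' : Y' ∈ line[ℝ, X, Z]) :
    ⟪H - X, H - X'⟫ = ⟪H - Y, H - Y'⟫ := by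
  obtain ⟨r, hr⟩ := exists_smul_sub_eq_sub_of_mem_affineSpan_pair hX'
  obtain ⟨s, hs⟩ := exists_smul_sub_eq_sub_of_mem_affineSpan_pair hY'
  rw [show H - X' = (H - Z) - r • (Y - Z) by rw [hr]; abel,
    show H - Y' = (H - Z) - s • (X - Z) by rw [hs]; abel]
  simp only [inner_sub_left, inner_sub_right, inner_smul_right, real_inner_comm] at hX hY ⊢
  linear_combination (1 - r) * hX - (1 - s) * hY

theorem inner_sub_eq_zero_of_inner_sub_sub_eq {A B C D H H' : V}
    (hH : ⟪H - A, H - B⟫ = ⟪H - C, H - D⟫) (hH' : ⟪H' - A, H' - B⟫ = ⟪H' - C, H' - D⟫) :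
    ⟪H - H', C + D - (A + B)⟫ = 0 := by
  simp only [inner_sub_left, inner_sub_right, inner_add_right, real_inner_comm] at hH hH' ⊢
  linear_combination hH - hH'

theorem collinear_of_forall_inner_sub_eq_zero (hV : finrank ℝ V = 2) {s : Set V} {c : V}
    (hc : c ≠ 0) (hs : ∀ p ∈ s, ∀ q ∈ s, ⟪p - q, c⟫ = 0) : Collinear ℝ s := by
  have : FiniteDimensional ℝ V := Module.finite_of_finrank_eq_succ hV
  have hle : vectorSpan ℝ s ≤ (ℝ ∙ c)ᗮ := by
    rw [vectorSpan_def, Submodule.span_le]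
    rintro _ ⟨p, hp, q, hq, rfl⟩
    exact Submodule.mem_orthogonal_singleton_iff_inner_left.2 (hs p hp q hq)
  have hc' := (ℝ ∙ c).finrank_add_finrank_orthogonal
  rw [finrank_span_singleton hc, hV] at hc'
  rw [collinear_iff_finrank_le_one]
  have := Submodule.finrank_mono hle
  omega

theorem collinear_of_forall_inner_sub_sub_eq (hV : finrank ℝ V = 2) {A B C D : V}
    (hABCD : A + B ≠ C + D) {s : Set V} (hs : ∀ H ∈ s, ⟪H - A, H - B⟫ = ⟪H - C, H - D⟫) :
    Collinear ℝ s :=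
  collinear_of_forall_inner_sub_eq_zero hV (sub_ne_zero.2 hABCD.symm) fun _ hp _ hq ↦
    inner_sub_eq_zero_of_inner_sub_sub_eq (hs _ hp) (hs _ hq)

end InnerProductSpace

theorem collinear_of_collinear_of_sub_eq_sub {k V : Type*} [Field k] [AddCommGroup V]
    [Module k V] {A B C D E : V} (hABE : Collinear k {A, B, E}) (hEDC : Collinear k {E, D, C})
    (hAB : A ≠ B) (hABCD : B - A = C - D) : Collinear k {A, E, D} := by
  have hDC : D ≠ C := fun h ↦ hAB (sub_eq_zero.1 (by rw [hABCD, h, sub_self])).symm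
  obtain ⟨r, hr⟩ := exists_smul_sub_eq_sub_of_mem_affineSpan_pair
    (hABE.mem_affineSpan_of_mem_of_ne (p₃ := E) (by simp) (by simp) (by simp) hAB)
  obtain ⟨t, ht⟩ := exists_smul_sub_eq_sub_of_mem_affineSpan_pair
    (hEDC.mem_affineSpan_of_mem_of_ne (p₃ := E) (by simp) (by simp) (by simp) hDC)
  rw [collinear_iff_of_mem (Set.mem_insert A _)]
  refine ⟨B - A, ?_⟩
  simp only [Set.mem_insert_iff, Set.mem_singleton_iff, vadd_eq_add, forall_eq_or_imp, forall_eq]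
  refine ⟨⟨0, by simp⟩, ⟨1 - r, ?_⟩, ⟨t - r, ?_⟩⟩
  · linear_combination (norm := module) -hr
  · linear_combination (norm := module) ht - hr + (1 - t) • hABCD

theorem perp_iff_inner_eq_zero {u v : ℂ} : Perp u v ↔ ⟪u, v⟫ = 0 := by
  rw [Perp, real_inner_comm, Complex.inner]

namespace IsOrthocenter

variable {H X Y Z : ℂ}

theorem rotate (h : IsOrthocenter H X Y Z) : IsOrthocenter H Y Z X := by
  obtain ⟨hX, hY⟩ := h
  rw [perp_iff_inner_eq_zero] at hX hY
  rw [IsOrthocenter, perp_iff_inner_eq_zero, perp_iff_inner_eq_zero]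
  simp only [inner_sub_left, inner_sub_right, real_inner_comm] at hX hY ⊢
  constructor
  · linear_combination -hY
  · linear_combination hX - hY

theorem inner_sub_sub_eq (h : IsOrthocenter H X Y Z) {X' Y' : ℂ} (hX' : X' ∈ line[ℝ, Y, Z])
    (hY' : Y' ∈ line[ℝ, X, Z]) : ⟪H - X, H - X'⟫ = ⟪H - Y, H - Y'⟫ :=
  inner_sub_sub_eq_of_orthocenter (perp_iff_inner_eq_zero.1 h.1) (perp_iff_inner_eq_zero.1 h.2)
    hX' hY'

end IsOrthocenter

/-- Steiner's theorem on the complete quadrilateral: four lines in general position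
(pairwise non-parallel, no three concurrent) determine four triangles, and the four
orthocentres of these triangles are collinear.  Line `i` is recorded by the three
intersection points `P i j` it makes with the other lines. -/
theorem stmt_4 (P12 P13 P14 P23 P24 P34 : ℂ)
    (hl1 : Collinear ℝ ({P12, P13, P14} : Set ℂ))
    (hl2 : Collinear ℝ ({P12, P23, P24} : Set ℂ))
    (hl3 : Collinear ℝ ({P13, P23, P34} : Set ℂ))
    (hl4 : Collinear ℝ ({P14, P24, P34} : Set ℂ))
    (ht1 : ¬ Collinear ℝ ({P23, P24, P34} : Set ℂ))
    (ht2 : ¬ Collinear ℝ ({P13, P14, P34} : Set ℂ))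
    (ht3 : ¬ Collinear ℝ ({P12, P14, P24} : Set ℂ))
    (ht4 : ¬ Collinear ℝ ({P12, P13, P23} : Set ℂ))
    (H1 H2 H3 H4 : ℂ)
    (hH1 : IsOrthocenter H1 P23 P24 P34)
    (hH2 : IsOrthocenter H2 P13 P14 P34)
    (hH3 : IsOrthocenter H3 P12 P14 P24)
    (hH4 : IsOrthocenter H4 P12 P13 P23) :
    Collinear ℝ ({H1, H2, H3, H4} : Set ℂ) := by
  have hne : P13 + P24 ≠ P12 + P34 := fun h ↦
    ht3 (collinear_of_collinear_of_sub_eq_sub hl1 hl4 (ne₁₂_of_not_collinear ht4)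
      (by linear_combination h))
  refine collinear_of_forall_inner_sub_sub_eq Complex.finrank_real_complex hne ?_
  simp only [Set.mem_insert_iff, Set.mem_singleton_iff]
  rintro H (rfl | rfl | rfl | rfl)
  · rw [real_inner_comm (H - P24), real_inner_comm (H - P34)]
    exact hH1.rotate.inner_sub_sub_eq
      (hl3.mem_affineSpan_of_mem_of_ne (by simp) (by simp) (by simp)
        (ne₁₃_of_not_collinear ht1).symm)
      (hl2.mem_affineSpan_of_mem_of_ne (by simp) (by simp) (by simp)
        (ne₁₂_of_not_collinear ht1).symm)
  · rw [real_inner_comm (H - P34)]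
    exact (hH2.rotate.rotate.inner_sub_sub_eq
      (hl1.mem_affineSpan_of_mem_of_ne (by simp) (by simp) (by simp)
        (ne₁₂_of_not_collinear ht2))
      (hl4.mem_affineSpan_of_mem_of_ne (by simp) (by simp) (by simp)
        (ne₂₃_of_not_collinear ht2).symm)).symm
  · rw [real_inner_comm (H - P24)]
    exact hH3.rotate.rotate.inner_sub_sub_eq
      (hl1.mem_affineSpan_of_mem_of_ne (by simp) (by simp) (by simp)
        (ne₁₂_of_not_collinear ht3))
      (hl4.mem_affineSpan_of_mem_of_ne (by simp) (by simp) (by simp)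
        (ne₂₃_of_not_collinear ht3).symm)
  · exact (hH4.inner_sub_sub_eq
      (hl3.mem_affineSpan_of_mem_of_ne (by simp) (by simp) (by simp)
        (ne₂₃_of_not_collinear ht4))
      (hl2.mem_affineSpan_of_mem_of_ne (by simp) (by simp) (by simp)
        (ne₁₃_of_not_collinear ht4))).symm
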